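/- Assume the parameter hypotheses, let c_f > 0, and let z₀ > 0 be fixed. Let ε ↦ c_ε > 0 and ε ↦ τ_ε > 0 be functions of ε > 0 with c_ε → c_f and τ_ε → τ₀ as ε → 0⁺, set a_ε := τ_ε/ε, and define Q_ε using parameters a = a_ε and c = c_ε. Then Q_ε(a_ε − z₀) → 1 − 2θ as ε → 0⁺. -/

import Mathlib

/-! Write `D_x(u) = A (e^{ω₂ u / c} - e^{ω₁ u / c})` with `A = ε / (c (ω₁ - ω₂))`, and
`G(x) = ∫_{x-a}^x K`, which is bounded by `‖K‖₁`. Since `ω₁ → 1`, the `ω₁`-part of `Q_ε` is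
`O(ε)`.
In the `ω₂`-part substitute `v = ω₂ u / c`; because `ω₁ ω₂ = ε (1 + γ)` the prefactor tends to
`1 / (1 + γ)`. For `v < 0` the lower endpoint `v c / ω₂ - z₀` of `G` tends to `-∞`, and the upper one
`v c / ω₂ + a_ε - z₀` tends to `+∞` or `-∞` according as `v > vs` or `v < vs`, where
`τ₀ = -c_f vs / (1 + γ)`, i.e. `vs = log (2θ(1 + γ) - γ)`. Dominated convergence gives the limit
`(1 + γ)⁻¹ ∫_{vs}^0 e^v dv = (1 - e^{vs}) / (1 + γ) = 1 - 2θ`. -/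

open MeasureTheory Real Filter Set Topology

noncomputable def om1 (γ ε : ℝ) : ℝ := (1 + γ * ε + Real.sqrt ((1 - γ * ε) ^ 2 - 4 * ε)) / 2

noncomputable def om2 (γ ε : ℝ) : ℝ := (1 + γ * ε - Real.sqrt ((1 - γ * ε) ^ 2 - 4 * ε)) / 2

noncomputable def Dx (γ x c ε : ℝ) : ℝ :=
  (ε / (c * (om1 γ ε - om2 γ ε))) *
    (-Real.exp (om1 γ ε * x / c) + Real.exp (om2 γ ε * x / c))

noncomputable def Qpulse (K : ℝ → ℝ) (γ a c ε z : ℝ) : ℝ :=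
  ∫ x in Iic z, Dx γ (x - z) c ε * ∫ y in (x - a)..x, K y

lemma setIntegral_Iic_eq_comp_add_right (f : ℝ → ℝ) (z : ℝ) :
    ∫ x in Iic z, f x = ∫ u in Iic 0, f (u + z) := by
  rw [← (measurePreserving_add_right volume z).setIntegral_preimage_emb
    (measurableEmbedding_addRight z), preimage_add_const_Iic, sub_self]

lemma integral_comp_mul_left_Iic_zero (g : ℝ → ℝ) {b : ℝ} (hb : 0 < b) :
    ∫ u in Iic (0:ℝ), g (b * u) = b⁻¹ * ∫ v in Iic (0:ℝ), g v := by
  have h := integral_comp_neg_Iic (0:ℝ) (fun u => g (-(b * u)))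
  simp only [mul_neg, neg_neg, neg_zero] at h
  rw [h, integral_comp_mul_left_Ioi (fun v => g (-v)) 0 hb, mul_zero, integral_comp_neg_Ioi,
    neg_zero, smul_eq_mul]

lemma integrableOn_exp_mul_mul_Iic {k M : ℝ} (hk : 0 < k) {g : ℝ → ℝ}
    (hg : AEStronglyMeasurable g) (hM : ∀ u, |g u| ≤ M) :
    IntegrableOn (fun u => exp (k * u) * g u) (Iic 0) :=
  (integrableOn_exp_mul_Iic hk 0).mul_bdd hg.restrict
    (ae_of_all _ fun u => (Real.norm_eq_abs _).trans_le (hM u))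

lemma abs_integral_exp_mul_mul_Iic_le {k M : ℝ} (hk : 0 < k) {g : ℝ → ℝ}
    (hM : ∀ u, |g u| ≤ M) : |∫ u in Iic (0:ℝ), exp (k * u) * g u| ≤ M / k :=
  calc |∫ u in Iic (0:ℝ), exp (k * u) * g u| ≤ ∫ u in Iic (0:ℝ), exp (k * u) * M := by
        rw [← Real.norm_eq_abs]
        refine norm_integral_le_of_norm_le ((integrableOn_exp_mul_Iic hk 0).mul_const M)
          (ae_of_all _ fun u => ?_)
        rw [Real.norm_eq_abs, abs_mul, abs_exp]
        exact mul_le_mul_of_nonneg_left (hM u) (exp_pos _).le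
    _ = M / k := by rw [integral_mul_const, integral_exp_mul_Iic hk, mul_zero, exp_zero]; ring

lemma integral_exp_sub_exp_mul_Iic {k₁ k₂ M : ℝ} (hk₁ : 0 < k₁) (hk₂ : 0 < k₂) {g : ℝ → ℝ}
    (hg : AEStronglyMeasurable g) (hM : ∀ u, |g u| ≤ M) :
    ∫ u in Iic (0:ℝ), (exp (k₂ * u) - exp (k₁ * u)) * g u =
      k₂⁻¹ * (∫ v in Iic (0:ℝ), exp v * g (v / k₂)) - ∫ u in Iic (0:ℝ), exp (k₁ * u) * g u := by
  simp_rw [sub_mul]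
  rw [integral_sub (integrableOn_exp_mul_mul_Iic hk₂ hg hM)
      (integrableOn_exp_mul_mul_Iic hk₁ hg hM),
    ← integral_comp_mul_left_Iic_zero (fun v => exp v * g (v / k₂)) hk₂]
  simp only [mul_div_cancel_left₀ _ hk₂.ne']

lemma tendsto_integral_Iic_exp_mul_of_tendsto_indicator {ι : Type*} {l : Filter ι}
    [l.IsCountablyGenerated] {h : ι → ℝ → ℝ} {M m vs : ℝ} (hvs : vs ≤ 0)
    (hmeas : ∀ i, AEStronglyMeasurable (h i)) (hM : ∀ i v, |h i v| ≤ M)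
    (hlim : ∀ v < 0, v ≠ vs →
      Tendsto (fun i => h i v) l (𝓝 ((Ioi vs).indicator (fun _ => m) v))) :
    Tendsto (fun i => ∫ v in Iic (0:ℝ), exp v * h i v) l (𝓝 (m * (1 - exp vs))) := by
  have hval : ∫ v in Iic (0:ℝ), exp v * (Ioi vs).indicator (fun _ => m) v = m * (1 - exp vs) := by
    simp_rw [← indicator_mul_right]
    rw [setIntegral_indicator measurableSet_Ioi, inter_comm, Ioi_inter_Iic,
      ← intervalIntegral.integral_of_le hvs, intervalIntegral.integral_mul_const, integral_exp,
      exp_zero, mul_comm]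
  rw [← hval]
  refine tendsto_integral_filter_of_dominated_convergence (fun v => exp v * M)
    (.of_forall fun i => ((continuous_exp.aestronglyMeasurable).mul (hmeas i)).restrict)
    (.of_forall fun i => ae_of_all _ fun v => ?_) ((integrableOn_exp_Iic 0).mul_const M) ?_
  · rw [Real.norm_eq_abs, abs_mul, abs_exp]
    exact mul_le_mul_of_nonneg_left (hM i v) (exp_pos v).le
  · have hne : ∀ w : ℝ, ∀ᵐ v ∂volume.restrict (Iic (0:ℝ)), v ≠ w := fun w =>
      ae_restrict_of_ae (measure_eq_zero_iff_ae_notMem.mp (measure_singleton w))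
    filter_upwards [ae_restrict_mem measurableSet_Iic, hne 0, hne vs] with v hv hv0 hvs'
    exact (hlim v (lt_of_le_of_ne hv hv0) hvs').const_mul _

lemma integrable_of_abs_le_mul_exp_neg_abs {K : ℝ → ℝ} (hK : AEStronglyMeasurable K) {α ρ : ℝ}
    (hρ : 0 < ρ) (hb : ∀ x, |K x| ≤ α * exp (-ρ * |x|)) : Integrable K := by
  have hexp : Integrable fun x : ℝ => exp (-ρ * |x|) := by
    rw [← integrableOn_univ, ← Iic_union_Ioi (a := 0)]
    refine IntegrableOn.union ?_ ?_
    · refine (integrableOn_exp_mul_Iic hρ 0).congr_fun (fun x hx => ?_) measurableSet_Iic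
      rw [abs_of_nonpos (mem_Iic.mp hx), neg_mul_neg]
    · refine (integrableOn_exp_mul_Ioi (neg_neg_of_pos hρ) 0).congr_fun (fun x hx => ?_)
        measurableSet_Ioi
      rw [abs_of_pos (mem_Ioi.mp hx)]
  exact (hexp.const_mul α).mono' hK (ae_of_all _ fun x => (Real.norm_eq_abs _).trans_le (hb x))

lemma abs_intervalIntegral_le_integral_norm {K : ℝ → ℝ} (hK : Integrable K) (p q : ℝ) :
    |∫ y in p..q, K y| ≤ ∫ y, ‖K y‖ := by
  rw [← Real.norm_eq_abs]
  exact intervalIntegral.norm_integral_le_integral_norm_uIoc.trans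
    (setIntegral_le_integral hK.norm (ae_of_all _ fun _ => norm_nonneg _))

lemma continuous_intervalIntegral_sub_const {K : ℝ → ℝ} (hK : Integrable K) (a : ℝ) :
    Continuous fun x => ∫ y in (x - a)..x, K y := by
  have hΦ := intervalIntegral.continuous_primitive (fun _ _ => hK.intervalIntegrable) 0
  have h : (fun x => ∫ y in (x - a)..x, K y) =
      fun x => (∫ y in 0..x, K y) - ∫ y in 0..(x - a), K y := by
    funext x
    rw [intervalIntegral.integral_interval_sub_left hK.intervalIntegrable hK.intervalIntegrable]
  rw [h]
  exact hΦ.sub (hΦ.comp (continuous_sub_right a))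

lemma tendsto_setIntegral_Iic_atBot {K : ℝ → ℝ} (hK : Integrable K) :
    Tendsto (fun x => ∫ t in Iic x, K t) atBot (𝓝 0) := by
  have h := tendsto_const_nhds (x := ∫ t in Iic (0:ℝ), K t) |>.sub
    (intervalIntegral_tendsto_integral_Iic 0 hK.integrableOn tendsto_id)
  rw [sub_self] at h
  refine h.congr fun x => ?_
  rw [id, ← intervalIntegral.integral_Iic_sub_Iic hK.integrableOn hK.integrableOn, sub_sub_cancel]

lemma tendsto_intervalIntegral_of_tendsto_atBot {K : ℝ → ℝ} (hK : Integrable K) {ι : Type*}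
    {l : Filter ι} {p q : ι → ℝ} (hp : Tendsto p l atBot) (hq : Tendsto q l atBot) :
    Tendsto (fun i => ∫ y in p i..q i, K y) l (𝓝 0) := by
  have h := ((tendsto_setIntegral_Iic_atBot hK).comp hq).sub
    ((tendsto_setIntegral_Iic_atBot hK).comp hp)
  rw [sub_zero] at h
  exact h.congr fun i => intervalIntegral.integral_Iic_sub_Iic hK.integrableOn hK.integrableOn

lemma om1_mul_om2 {γ ε : ℝ} (h : 0 ≤ (1 - γ * ε) ^ 2 - 4 * ε) :
    om1 γ ε * om2 γ ε = ε * (1 + γ) := by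
  unfold om1 om2
  linear_combination (-1/4 : ℝ) * Real.sq_sqrt h

lemma tendsto_om1 (γ : ℝ) : Tendsto (om1 γ) (𝓝 0) (𝓝 1) := by
  have h : Continuous (om1 γ) := by unfold om1; fun_prop
  simpa [om1] using h.tendsto 0

lemma tendsto_om2 (γ : ℝ) : Tendsto (om2 γ) (𝓝 0) (𝓝 0) := by
  have h : Continuous (om2 γ) := by unfold om2; fun_prop
  simpa [om2] using h.tendsto 0

lemma eventually_discriminant_pos (γ : ℝ) :
    ∀ᶠ ε in 𝓝 (0:ℝ), 0 < (1 - γ * ε) ^ 2 - 4 * ε := by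
  have h : Continuous fun ε : ℝ => (1 - γ * ε) ^ 2 - 4 * ε := by fun_prop
  exact continuousAt_const.eventually_lt h.continuousAt (by norm_num)

lemma eventually_om1_mul_om2 (γ : ℝ) : ∀ᶠ ε in 𝓝 (0:ℝ), om1 γ ε * om2 γ ε = ε * (1 + γ) :=
  (eventually_discriminant_pos γ).mono fun _ hd => om1_mul_om2 hd.le

lemma eventually_om2_pos_lt_om1 {γ : ℝ} (hγ : 0 < 1 + γ) :
    ∀ᶠ ε in 𝓝[>] 0, 0 < om2 γ ε ∧ om2 γ ε < om1 γ ε := by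
  filter_upwards [self_mem_nhdsWithin, nhdsWithin_le_nhds ((eventually_discriminant_pos γ).and
    ((tendsto_om1 γ).eventually (lt_mem_nhds one_pos)))] with ε hε ⟨hd, h1⟩
  refine ⟨pos_of_mul_pos_right ((om1_mul_om2 hd.le).symm ▸ mul_pos hε hγ) h1.le, ?_⟩
  unfold om1 om2
  linarith [Real.sqrt_pos.mpr hd]

lemma Dx_eq_exp_sub_exp (γ u c ε : ℝ) : Dx γ u c ε =
    ε / (c * (om1 γ ε - om2 γ ε)) * (exp (om2 γ ε / c * u) - exp (om1 γ ε / c * u)) := by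
  rw [Dx, mul_div_right_comm, mul_div_right_comm (om2 γ ε)]
  ring

lemma Qpulse_eq {K : ℝ → ℝ} (hK : Integrable K) {γ c ε : ℝ} (hc : 0 < c) (h2 : 0 < om2 γ ε)
    (h1 : 0 < om1 γ ε) (a z : ℝ) :
    Qpulse K γ a c ε z = ε / (c * (om1 γ ε - om2 γ ε)) *
      ((om2 γ ε / c)⁻¹ * (∫ v in Iic (0:ℝ), exp v *
          ∫ y in (v / (om2 γ ε / c) + z - a)..(v / (om2 γ ε / c) + z), K y) -
        ∫ u in Iic (0:ℝ), exp (om1 γ ε / c * u) * ∫ y in (u + z - a)..(u + z), K y) := by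
  have hG := (continuous_intervalIntegral_sub_const hK a).comp (continuous_add_const z)
  rw [Qpulse, setIntegral_Iic_eq_comp_add_right,
    ← integral_exp_sub_exp_mul_Iic (div_pos h1 hc) (div_pos h2 hc)
      (g := fun u => ∫ y in (u + z - a)..(u + z), K y) hG.aestronglyMeasurable
      (fun _ => abs_intervalIntegral_le_integral_norm hK _ _), ← integral_const_mul]
  simp_rw [add_sub_cancel_right, Dx_eq_exp_sub_exp, mul_assoc]

lemma tendsto_Dx_prefactor_div_om2 {γ : ℝ} (hγ : 0 < 1 + γ) {c : ℝ → ℝ}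
    (hcpos : ∀ᶠ ε in 𝓝[>] 0, 0 < c ε) :
    Tendsto (fun ε => ε / (c ε * (om1 γ ε - om2 γ ε)) * (om2 γ ε / c ε)⁻¹) (𝓝[>] 0)
      (𝓝 (1 + γ)⁻¹) := by
  have h : Tendsto (fun ε => om1 γ ε / ((om1 γ ε - om2 γ ε) * (1 + γ))) (𝓝 0)
      (𝓝 (1 / ((1 - 0) * (1 + γ)))) :=
    (tendsto_om1 γ).div (((tendsto_om1 γ).sub (tendsto_om2 γ)).mul_const _) (by simpa using hγ.ne')
  rw [sub_zero, one_mul, one_div] at h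
  refine (h.mono_left nhdsWithin_le_nhds).congr' ?_
  filter_upwards [eventually_om2_pos_lt_om1 hγ, hcpos,
    nhdsWithin_le_nhds (eventually_om1_mul_om2 γ)] with ε ⟨h2, h12⟩ hc hprod
  have : 0 < om1 γ ε - om2 γ ε := by linarith
  field_simp
  linear_combination hprod

lemma tendsto_Dx_prefactor_mul_of_abs_le {γ M : ℝ} (hγ : 0 < 1 + γ) {c J : ℝ → ℝ}
    (hcpos : ∀ᶠ ε in 𝓝[>] 0, 0 < c ε) (hJ : ∀ᶠ ε in 𝓝[>] 0, |J ε| ≤ M / (om1 γ ε / c ε)) :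
    Tendsto (fun ε => ε / (c ε * (om1 γ ε - om2 γ ε)) * J ε) (𝓝[>] 0) (𝓝 0) := by
  have hbound : Tendsto (fun ε => ε * M / ((om1 γ ε - om2 γ ε) * om1 γ ε)) (𝓝 0)
      (𝓝 (0 * M / ((1 - 0) * 1))) :=
    (tendsto_id.mul_const M).div (((tendsto_om1 γ).sub (tendsto_om2 γ)).mul (tendsto_om1 γ))
      (by norm_num)
  rw [zero_mul, zero_div] at hbound
  refine squeeze_zero_norm' ?_ (hbound.mono_left nhdsWithin_le_nhds)
  filter_upwards [eventually_om2_pos_lt_om1 hγ, hcpos, self_mem_nhdsWithin, hJ]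
    with ε ⟨h2, h12⟩ hc hε hJε
  have hsub : 0 < om1 γ ε - om2 γ ε := by linarith
  have hA : 0 < ε / (c ε * (om1 γ ε - om2 γ ε)) := div_pos hε (mul_pos hc hsub)
  rw [Real.norm_eq_abs, abs_mul, abs_of_pos hA]
  calc _ ≤ ε / (c ε * (om1 γ ε - om2 γ ε)) * (M / (om1 γ ε / c ε)) :=
        mul_le_mul_of_nonneg_left hJε hA.le
    _ = _ := by field_simp

/- `v / (ω₂ / c) + a - z₀ = (v c ω₁ / (1 + γ) + τ - ε z₀) / ε` because `ω₁ ω₂ = ε (1 + γ)`, and the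
numerator tends to `c_f (v - vs) / (1 + γ)`: the upper endpoint escapes to `±∞` according to the
sign of `v - vs`. -/
lemma tendsto_pulse_integrand {K : ℝ → ℝ} (hK : Integrable K) {γ cf vs z₀ : ℝ} (hγ : 0 < 1 + γ)
    (hcf : 0 < cf) {c τ : ℝ → ℝ} (hcpos : ∀ᶠ ε in 𝓝[>] 0, 0 < c ε)
    (hc : Tendsto c (𝓝[>] 0) (𝓝 cf)) (hτ : Tendsto τ (𝓝[>] 0) (𝓝 (-(cf / (1 + γ)) * vs)))
    {v : ℝ} (hv : v < 0) (hvs : v ≠ vs) :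
    Tendsto (fun ε => ∫ y in (v / (om2 γ ε / c ε) + (τ ε / ε - z₀) - τ ε / ε)..
        (v / (om2 γ ε / c ε) + (τ ε / ε - z₀)), K y) (𝓝[>] 0)
      (𝓝 ((Ioi vs).indicator (fun _ => ∫ x, K x) v)) := by
  have hk : Tendsto (fun ε => om2 γ ε / c ε) (𝓝[>] 0) (𝓝[>] 0) := by
    refine tendsto_nhdsWithin_iff.2 ⟨?_, ?_⟩
    · have h := ((tendsto_om2 γ).mono_left nhdsWithin_le_nhds).div hc hcf.ne'
      rwa [zero_div] at h
    · filter_upwards [eventually_om2_pos_lt_om1 hγ, hcpos] with ε h hc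
      exact div_pos h.1 hc
  have hlow : Tendsto (fun ε => v / (om2 γ ε / c ε) + (τ ε / ε - z₀) - τ ε / ε) (𝓝[>] 0) atBot :=
    (tendsto_atBot_add_const_right _ (-z₀)
      ((tendsto_inv_nhdsGT_zero.comp hk).const_mul_atTop_of_neg hv)).congr fun ε => by
        simp only [Function.comp_apply, div_eq_mul_inv]; ring
  have hnum : Tendsto (fun ε => v * (c ε * om1 γ ε / (1 + γ)) + τ ε - ε * z₀) (𝓝[>] 0)
      (𝓝 (cf / (1 + γ) * (v - vs))) := by
    have := ((tendsto_const_nhds (x := v)).mul ((hc.mul ((tendsto_om1 γ).mono_left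
      nhdsWithin_le_nhds)).div_const (1 + γ))).add hτ |>.sub
      ((tendsto_id.mono_left nhdsWithin_le_nhds).mul_const z₀)
    convert this using 2
    simp only [id]
    ring
  have hup : (fun ε => (v * (c ε * om1 γ ε / (1 + γ)) + τ ε - ε * z₀) * ε⁻¹) =ᶠ[𝓝[>] 0]
      fun ε => v / (om2 γ ε / c ε) + (τ ε / ε - z₀) := by
    filter_upwards [eventually_om2_pos_lt_om1 hγ, hcpos, self_mem_nhdsWithin,
      nhdsWithin_le_nhds (eventually_om1_mul_om2 γ)] with ε ⟨h2, h12⟩ hc hε hprod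
    have hε' : ε ≠ 0 := (mem_Ioi.mp hε).ne'
    field_simp
    linear_combination v * c ε * hprod
  rcases hvs.lt_or_gt with hlt | hgt
  · rw [indicator_of_notMem (show v ∉ Ioi vs from not_lt.2 hlt.le)]
    refine tendsto_intervalIntegral_of_tendsto_atBot hK hlow
      ((Tendsto.neg_mul_atTop ?_ hnum tendsto_inv_nhdsGT_zero).congr' hup)
    exact mul_neg_of_pos_of_neg (div_pos hcf hγ) (sub_neg.2 hlt)
  · rw [indicator_of_mem (show v ∈ Ioi vs from hgt)]
    refine intervalIntegral_tendsto_integral hK hlow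
      ((Tendsto.pos_mul_atTop ?_ hnum tendsto_inv_nhdsGT_zero).congr' hup)
    exact mul_pos (div_pos hcf hγ) (sub_pos.2 hgt)

lemma tendsto_Qpulse {K : ℝ → ℝ} (hK : Integrable K) {γ cf vs : ℝ} (hγ : 0 < 1 + γ)
    (hcf : 0 < cf) (hvs : vs ≤ 0) (z₀ : ℝ) {c τ : ℝ → ℝ} (hcpos : ∀ᶠ ε in 𝓝[>] 0, 0 < c ε)
    (hc : Tendsto c (𝓝[>] 0) (𝓝 cf)) (hτ : Tendsto τ (𝓝[>] 0) (𝓝 (-(cf / (1 + γ)) * vs))) :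
    Tendsto (fun ε => Qpulse K γ (τ ε / ε) (c ε) ε (τ ε / ε - z₀)) (𝓝[>] 0)
      (𝓝 ((1 + γ)⁻¹ * ((∫ x, K x) * (1 - exp vs)))) := by
  have hG := continuous_intervalIntegral_sub_const hK
  have hGM := abs_intervalIntegral_le_integral_norm hK
  have hI := tendsto_integral_Iic_exp_mul_of_tendsto_indicator (l := 𝓝[>] 0) hvs
    (h := fun ε v => ∫ y in (v / (om2 γ ε / c ε) + (τ ε / ε - z₀) - τ ε / ε)..
      (v / (om2 γ ε / c ε) + (τ ε / ε - z₀)), K y)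
    (fun _ => ((hG _).comp ((continuous_id.div_const _).add continuous_const)).aestronglyMeasurable)
    (fun _ _ => hGM _ _) (fun _ hv hvs' => tendsto_pulse_integrand hK hγ hcf hcpos hc hτ hv hvs')
  have hJ : ∀ᶠ ε in 𝓝[>] 0, |∫ u in Iic (0:ℝ), exp (om1 γ ε / c ε * u) *
      ∫ y in (u + (τ ε / ε - z₀) - τ ε / ε)..(u + (τ ε / ε - z₀)), K y| ≤
      (∫ y, ‖K y‖) / (om1 γ ε / c ε) := by
    filter_upwards [eventually_om2_pos_lt_om1 hγ, hcpos] with ε h hc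
    exact abs_integral_exp_mul_mul_Iic_le (div_pos (h.1.trans h.2) hc) fun _ => hGM _ _
  have hmain := ((tendsto_Dx_prefactor_div_om2 hγ hcpos).mul hI).sub
    (tendsto_Dx_prefactor_mul_of_abs_le hγ hcpos hJ)
  rw [sub_zero] at hmain
  refine hmain.congr' ?_
  filter_upwards [eventually_om2_pos_lt_om1 hγ, hcpos] with ε h hc
  rw [Qpulse_eq hK hc h.1 (h.1.trans h.2)]
  ring

theorem statement15_general (K : ℝ → ℝ)
    (hK : Continuous K)
    (hKdecay : ∃ α > (0:ℝ), ∃ ρ > (0:ℝ), ∀ x : ℝ, |K x| ≤ α * Real.exp (-ρ * |x|))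
    (hKint : (∫ x : ℝ, K x) = 1)
    (θ γ cf z₀ : ℝ)
    (hθh : θ < 1 / 2)
    (hγ : 0 < γ) (hγθ : γ / (1 + γ) < θ)
    (hcf : 0 < cf)
    (c τ : ℝ → ℝ)
    (hcpos : ∀ᶠ ε in 𝓝[>] (0:ℝ), 0 < c ε)
    (hccf : Tendsto c (𝓝[>] (0:ℝ)) (𝓝 cf))
    (hττ₀ : Tendsto τ (𝓝[>] (0:ℝ))
      (𝓝 (-(cf / (1 + γ)) * Real.log (2 * θ * (1 + γ) - γ)))) :
    Tendsto (fun ε => Qpulse K γ (τ ε / ε) (c ε) ε (τ ε / ε - z₀))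
      (𝓝[>] (0:ℝ)) (𝓝 (1 - 2 * θ)) := by
  obtain ⟨α, -, ρ, hρ, hKb⟩ := hKdecay
  have hγ1 : 0 < 1 + γ := by linarith
  have hγθ' : γ < θ * (1 + γ) := (div_lt_iff₀ hγ1).mp hγθ
  have harg_pos : 0 < 2 * θ * (1 + γ) - γ := by linarith
  have harg_lt_one : 2 * θ * (1 + γ) - γ < 1 := by nlinarith
  have h := tendsto_Qpulse (integrable_of_abs_le_mul_exp_neg_abs hK.aestronglyMeasurable hρ hKb)
    hγ1 hcf (log_neg harg_pos harg_lt_one).le z₀ hcpos hccf hττ₀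
  convert h using 2
  rw [hKint, exp_log harg_pos]
  field_simp
  ring

theorem statement15 (K : ℝ → ℝ)
    (hK : Continuous K)
    (hKdecay : ∃ α > (0:ℝ), ∃ ρ > (0:ℝ), ∀ x : ℝ, |K x| ≤ α * Real.exp (-ρ * |x|))
    (hKint : (∫ x : ℝ, K x) = 1)
    (θ γ cf z₀ : ℝ)
    (hθ0 : 0 < θ) (hθh : θ < 1 / 2) (hθK : θ < ∫ x in Iio (0:ℝ), K x)
    (hγ : 0 < γ) (hγθ : γ / (1 + γ) < θ)
    (hcf : 0 < cf) (hz₀ : 0 < z₀)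
    (c τ : ℝ → ℝ)
    (hcpos : ∀ᶠ ε in 𝓝[>] (0:ℝ), 0 < c ε) (hτpos : ∀ᶠ ε in 𝓝[>] (0:ℝ), 0 < τ ε)
    (hccf : Tendsto c (𝓝[>] (0:ℝ)) (𝓝 cf))
    (hττ₀ : Tendsto τ (𝓝[>] (0:ℝ))
      (𝓝 (-(cf / (1 + γ)) * Real.log (2 * θ * (1 + γ) - γ)))) :
    Tendsto (fun ε => Qpulse K γ (τ ε / ε) (c ε) ε (τ ε / ε - z₀))
      (𝓝[>] (0:ℝ)) (𝓝 (1 - 2 * θ)) :=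
  statement15_general K hK hKdecay hKint θ γ cf z₀ hθh hγ hγθ hcf c τ hcpos hccf hττ₀
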